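/- arXiv:2402.15888 — 5 statements merged into one kernel-verified Lean document; each statement's English description precedes it below -/
import Mathlib

section
/- Let n_r, n_l be natural numbers with n_l ≥ n_r and set N = n_r + n_l. The number of step sequences of length N having exactly n_r entries equal to +1 and n_l entries equal to −1, and whose partial sums satisfy S_k ≤ 0 for all 1 ≤ k ≤ N, equals binom(n_r + n_l, n_r) · (n_l − n_r + 1)/(n_l + 1). (Bertrand's ballot theorem with ties allowed, eq. (7)-(8) of the paper.) -/
def stepVal (b : Bool) : ℤ := if b then 1 else -1

def psum {N : ℕ} (s : Fin N → Bool) (k : ℕ) : ℤ :=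
  ∑ j ∈ Finset.range k, if h : j < N then stepVal (s ⟨j, h⟩) else 0

open Classical in
noncomputable def cnt (N p q : ℕ) : ℕ :=
  ((Finset.univ : Finset (Fin N → Bool)).filter
    (fun s => ((Finset.univ.filter (fun j => s j = true)).card = p) ∧
              ((Finset.univ.filter (fun j => s j = false)).card = q) ∧
              (∀ k ∈ Finset.Icc 1 N, psum s k ≤ 0))).card

lemma psum_init {N : ℕ} (s : Fin (N+1) → Bool) {k : ℕ} (hk : k ≤ N) :
    psum (Fin.init s) k = psum s k := by
  unfold psum
  refine Finset.sum_congr rfl fun j hj => ?_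
  rw [Finset.mem_range] at hj
  have h1 : j < N := lt_of_lt_of_le hj hk
  have h2 : j < N + 1 := Nat.lt_succ_of_lt h1
  rw [dif_pos h1, dif_pos h2]
  rfl

lemma psum_last {N : ℕ} (s : Fin (N+1) → Bool) :
    psum s (N+1) = psum s N + stepVal (s (Fin.last N)) := by
  unfold psum
  rw [Finset.sum_range_succ, dif_pos (Nat.lt_succ_self N)]
  rfl

lemma psum_full {N a b : ℕ} (s : Fin N → Bool)
    (ha : (Finset.univ.filter (fun j => s j = true)).card = a)
    (hb : (Finset.univ.filter (fun j => s j = false)).card = b) :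
    psum s N = (a : ℤ) - b := by
  have h1 : psum s N = ∑ i : Fin N, stepVal (s i) := by
    unfold psum
    rw [← Fin.sum_univ_eq_sum_range (fun j => if h : j < N then stepVal (s ⟨j, h⟩) else 0) N]
    refine Finset.sum_congr rfl fun i _ => ?_
    rw [dif_pos i.isLt]
  rw [h1]
  have h2 : ∀ i : Fin N, stepVal (s i)
      = (if s i = true then (1:ℤ) else 0) - (if s i = false then (1:ℤ) else 0) := by
    intro i; cases h : s i <;> simp [stepVal, h]
  rw [Finset.sum_congr rfl (fun i _ => h2 i), Finset.sum_sub_distrib,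
    Finset.sum_boole, Finset.sum_boole, ha, hb]

lemma card_filter_succ {N : ℕ} (s : Fin (N+1) → Bool) (b : Bool) :
    (Finset.univ.filter (fun j => s j = b)).card
      = (Finset.univ.filter (fun j => Fin.init s j = b)).card
        + (if s (Fin.last N) = b then 1 else 0) := by
  classical
  rw [Finset.card_filter, Finset.card_filter, Fin.sum_univ_castSucc]
  rfl

lemma cnt_base (q : ℕ) : cnt q 0 q = 1 := by
  classical
  rw [cnt, Finset.card_eq_one]
  refine ⟨fun _ => false, ?_⟩
  ext s
  simp only [Finset.mem_filter, Finset.mem_univ, true_and, Finset.mem_singleton]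
  constructor
  · rintro ⟨h0, -, -⟩
    funext j
    rw [Finset.card_eq_zero, Finset.filter_eq_empty_iff] at h0
    simpa using h0 (Finset.mem_univ j)
  · rintro rfl
    refine ⟨by simp, by simp, ?_⟩
    intro k hk
    unfold psum
    apply Finset.sum_nonpos
    intro j hj
    split
    · simp [stepVal]
    · exact le_refl 0

lemma cnt_empty (p q : ℕ) (h : q < p) : cnt (p + q) p q = 0 := by
  classical
  rw [cnt, Finset.card_eq_zero, Finset.eq_empty_iff_forall_notMem]
  intro s hs
  simp only [Finset.mem_filter] at hs
  obtain ⟨-, ha, hb, hc⟩ := hs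
  have hfull := psum_full s ha hb
  have hmem : p + q ∈ Finset.Icc 1 (p+q) := by
    simp only [Finset.mem_Icc]; omega
  have h2 := hc _ hmem
  rw [hfull] at h2
  have h3 : (q:ℤ) < p := by exact_mod_cast h
  linarith

open Classical in
lemma cnt_rec (p q : ℕ) (h : p ≤ q) :
    cnt (p+q+2) (p+1) (q+1) = cnt (p+q+1) p (q+1) + cnt (p+q+1) (p+1) q := by
  classical
  set N : ℕ := p + q + 1 with hN
  have hNN : p + q + 2 = N + 1 := rfl
  rw [hNN]
  unfold cnt
  set S : Finset (Fin (N+1) → Bool) :=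
    (Finset.univ.filter
      (fun s => ((Finset.univ.filter (fun j => s j = true)).card = p+1) ∧
                ((Finset.univ.filter (fun j => s j = false)).card = q+1) ∧
                (∀ k ∈ Finset.Icc 1 (N+1), psum s k ≤ 0))) with hS
  have hsplit : S.card
      = (S.filter (fun s => s (Fin.last N) = true)).card
        + (S.filter (fun s => ¬ (s (Fin.last N) = true))).card :=
    (Finset.card_filter_add_card_filter_not _).symm
  refine Eq.trans ?_ (hsplit.trans ?_)
  · rw [hS]
    congr
  congr 1
  · -- last = true
    refine Finset.card_bij' (fun s _ => Fin.init s) (fun t _ => Fin.snoc t true) ?_ ?_ ?_ ?_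
    · intro s hs
      simp only [hS, Finset.mem_filter, Finset.mem_univ, true_and] at hs ⊢
      obtain ⟨⟨ha, hb, hc⟩, hs'⟩ := hs
      have hlast : s (Fin.last N) = true := hs'
      refine ⟨?_, ?_, ?_⟩
      · have hcf := card_filter_succ s true
        rw [ha, hlast] at hcf
        simpa using hcf.symm
      · have hcf := card_filter_succ s false
        rw [hb, hlast] at hcf
        simpa using hcf.symm
      · intro k hk
        rw [Finset.mem_Icc] at hk
        rw [psum_init s hk.2]
        have hkle : k ≤ N + 1 := Nat.le_succ_of_le hk.2
        exact hc k (Finset.mem_Icc.mpr ⟨hk.1, hkle⟩)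
    · intro t ht
      simp only [hS, Finset.mem_filter, Finset.mem_univ, true_and, Bool.not_eq_true] at ht ⊢
      obtain ⟨ha, hb, hc⟩ := ht
      set st : Fin (N+1) → Bool := Fin.snoc t true with hst
      have hinit : Fin.init st = t := by simp [hst]
      have hlast : st (Fin.last N) = true := by simp [hst]
      refine ⟨⟨?_, ?_, ?_⟩, hlast⟩
      · rw [card_filter_succ st true, hlast, hinit, ha]
        simp
      · rw [card_filter_succ st false, hlast, hinit, hb]
        simp
      · intro k hk
        rw [Finset.mem_Icc] at hk
        rcases Nat.lt_or_ge k (N+1) with hkN | hkN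
        · have hk' : k ≤ N := Nat.lt_succ_iff.mp hkN
          rw [← psum_init st hk', hinit]
          exact hc k (Finset.mem_Icc.mpr ⟨hk.1, hk'⟩)
        · have hkk : k = N + 1 := le_antisymm hk.2 hkN
          subst hkk
          rw [psum_last st, hlast]
          have hfull : psum st N = (p : ℤ) - (q+1) := by
            rw [← psum_init st (le_refl N), hinit]
            rw [psum_full t ha hb]
            push_cast
            ring
          rw [hfull]
          have hpq : (p:ℤ) ≤ q := by exact_mod_cast h
          simp only [stepVal, if_true]
          linarith
    · intro s hs
      simp only [hS, Finset.mem_filter, Bool.not_eq_true] at hs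
      have hlast := hs.2
      rw [show (true:Bool) = s (Fin.last N) from hlast.symm]
      exact Fin.snoc_init_self s
    · intro t ht
      simp

  · -- last = false
    refine Finset.card_bij' (fun s _ => Fin.init s) (fun t _ => Fin.snoc t false) ?_ ?_ ?_ ?_
    · intro s hs
      simp only [hS, Finset.mem_filter, Finset.mem_univ, true_and, Bool.not_eq_true] at hs ⊢
      obtain ⟨⟨ha, hb, hc⟩, hs'⟩ := hs
      have hlast : s (Fin.last N) = false := hs'
      refine ⟨?_, ?_, ?_⟩
      · have hcf := card_filter_succ s true
        rw [ha, hlast] at hcf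
        simpa using hcf.symm
      · have hcf := card_filter_succ s false
        rw [hb, hlast] at hcf
        simpa using hcf.symm
      · intro k hk
        rw [Finset.mem_Icc] at hk
        rw [psum_init s hk.2]
        have hkle : k ≤ N + 1 := Nat.le_succ_of_le hk.2
        exact hc k (Finset.mem_Icc.mpr ⟨hk.1, hkle⟩)
    · intro t ht
      simp only [hS, Finset.mem_filter, Finset.mem_univ, true_and, Bool.not_eq_true] at ht ⊢
      obtain ⟨ha, hb, hc⟩ := ht
      set st : Fin (N+1) → Bool := Fin.snoc t false with hst
      have hinit : Fin.init st = t := by simp [hst]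
      have hlast : st (Fin.last N) = false := by simp [hst]
      refine ⟨⟨?_, ?_, ?_⟩, hlast⟩
      · rw [card_filter_succ st true, hlast, hinit, ha]
        simp
      · rw [card_filter_succ st false, hlast, hinit, hb]
        simp
      · intro k hk
        rw [Finset.mem_Icc] at hk
        rcases Nat.lt_or_ge k (N+1) with hkN | hkN
        · have hk' : k ≤ N := Nat.lt_succ_iff.mp hkN
          rw [← psum_init st hk', hinit]
          exact hc k (Finset.mem_Icc.mpr ⟨hk.1, hk'⟩)
        · have hkk : k = N + 1 := le_antisymm hk.2 hkN
          subst hkk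
          rw [psum_last st, hlast]
          have hfull : psum st N = (p : ℤ) + 1 - q := by
            rw [← psum_init st (le_refl N), hinit]
            rw [psum_full t ha hb]
            push_cast
            ring
          rw [hfull]
          have hpq : (p:ℤ) ≤ q := by exact_mod_cast h
          simp only [stepVal, Bool.false_eq_true, if_false]
          linarith
    · intro s hs
      simp only [hS, Finset.mem_filter, Bool.not_eq_true] at hs
      have hlast := hs.2
      rw [show (false:Bool) = s (Fin.last N) from hlast.symm]
      exact Fin.snoc_init_self s
    · intro t ht
      simp


lemma cnt_formula : ∀ n p q : ℕ, p + q = n → p ≤ q →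
    (cnt n p q : ℚ) = (n.choose p : ℚ) - (n.choose (q+1) : ℚ) := by
  intro n
  induction n using Nat.strong_induction_on with
  | _ n ih =>
    intro p q hn hpq
    match p, q with
    | 0, q =>
      have hq : q = n := by omega
      subst hq
      rw [cnt_base, Nat.choose_zero_right, Nat.choose_eq_zero_of_lt (Nat.lt_succ_self q)]
      norm_num
    | p+1, q+1 =>
      have hn2 : n = p + q + 2 := by omega
      subst hn2
      have hrec := cnt_rec p q (by omega)
      rw [hrec]
      have h1 : (cnt (p+q+1) p (q+1) : ℚ)
          = ((p+q+1).choose p : ℚ) - ((p+q+1).choose (q+2) : ℚ) :=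
        ih (p+q+1) (by omega) p (q+1) (by omega) (by omega)
      rcases Nat.lt_or_ge p q with hlt | hge
      · have h2 : (cnt (p+q+1) (p+1) q : ℚ)
            = ((p+q+1).choose (p+1) : ℚ) - ((p+q+1).choose (q+1) : ℚ) := by
          exact ih (p+q+1) (by omega) (p+1) q (by omega) (by omega)
        push_cast [h1, h2]
        rw [show p+q+2 = (p+q+1)+1 from rfl, Nat.choose_succ_succ (p+q+1) p,
          show q+1+1 = q+2 from rfl, Nat.choose_succ_succ (p+q+1) (q+1)]
        push_cast
        ring
      · have hpq' : p = q := by omega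
        subst hpq'
        have h2 : cnt (p+p+1) (p+1) p = 0 := by
          have := cnt_empty (p+1) p (by omega)
          rw [← this]
          congr 1
          omega
        rw [h2]
        push_cast [h1]
        rw [show p+p+2 = (p+p+1)+1 from rfl, Nat.choose_succ_succ (p+p+1) p,
          show p+1+1 = p+2 from rfl, Nat.choose_succ_succ (p+p+1) (p+1)]
        push_cast
        have hsymm : (p+p+1).choose (p+1) = (p+p+1).choose p := by
          rw [← Nat.choose_symm (by omega : p + 1 ≤ p+p+1)]
          congr 1
          omega
        rw [hsymm]
        ring


open Classical in
theorem ballot_with_ties (n_r n_l : ℕ) (h : n_r ≤ n_l) :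
    ((Finset.univ : Finset (Fin (n_r + n_l) → Bool)).filter
        (fun (s : Fin (n_r + n_l) → Bool) =>
          ((Finset.univ.filter (fun j => s j = true)).card = n_r) ∧
          ((Finset.univ.filter (fun j => s j = false)).card = n_l) ∧
          (∀ k ∈ Finset.Icc 1 (n_r + n_l), psum s k ≤ 0))).card
      = ((n_r + n_l).choose n_r : ℚ) * ((n_l : ℚ) - (n_r : ℚ) + 1) / ((n_l : ℚ) + 1) := by
  have hL : ((Finset.univ : Finset (Fin (n_r + n_l) → Bool)).filter
        (fun (s : Fin (n_r + n_l) → Bool) =>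
          ((Finset.univ.filter (fun j => s j = true)).card = n_r) ∧
          ((Finset.univ.filter (fun j => s j = false)).card = n_l) ∧
          (∀ k ∈ Finset.Icc 1 (n_r + n_l), psum s k ≤ 0))).card
      = cnt (n_r + n_l) n_r n_l := by
    unfold cnt
    congr
  rw [hL, cnt_formula (n_r + n_l) n_r n_l rfl h]
  have key : ((n_r + n_l).choose (n_l + 1) : ℚ) * ((n_l : ℚ) + 1)
      = ((n_r + n_l).choose n_r : ℚ) * (n_r : ℚ) := by
    have h1 := Nat.choose_succ_right_eq (n_r + n_l) n_l
    have h2 : n_r + n_l - n_l = n_r := Nat.add_sub_cancel n_r n_l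
    have h3 : (n_r + n_l).choose n_l = (n_r + n_l).choose n_r := by
      rw [← Nat.choose_symm (Nat.le_add_right n_r n_l)]
      congr 1
      exact (Nat.add_sub_cancel_left n_r n_l).symm
    rw [h2, h3] at h1
    exact_mod_cast h1
  have hden : ((n_l : ℚ) + 1) ≠ 0 := by positivity
  field_simp
  linear_combination -key
end

section
/- For every natural number N ≥ 1, with n = ⌈N/2⌉, the number W(1,N) of step sequences of length N whose partial sums satisfy S_k ≤ 0 for all 1 ≤ k ≤ N equals the sum over k from n to N of binom(N,k)·(2k − N + 1)/(k + 1). Equivalently, the probability that a simple ±1 random walk started adjacent to an absorbing boundary has not hit the boundary after N steps is 2^{−N} · Σ_{k=n}^{N} binom(N,k)(2k−N+1)/(k+1). (Eq. (8) of the paper.) -/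
/- `W a N` is the number of step sequences of length `N` whose partial sums satisfy
`S_k < a` for all `0 ≤ k ≤ N` (a walk started at distance `a` from an absorbing
boundary survives `N` steps); by convention `W 0 N = 0`. -/
open Classical in
noncomputable def W (a N : ℕ) : ℕ :=
  ((Finset.univ : Finset (Fin N → Bool)).filter
    (fun s => ∀ k ∈ Finset.range (N + 1), psum s k < (a : ℤ))).card

/- Eq. (8) of the paper: for `N ≥ 1` and `n = ⌈N/2⌉`, the number `W(1,N)` of step
sequences of length `N` with `S_k ≤ 0` for all `1 ≤ k ≤ N` equals
`Σ_{k=n}^{N} binom(N,k)·(2k − N + 1)/(k + 1)`; equivalently, the survival probability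
after `N` steps is `2^{−N}` times this sum. -/
lemma psum_zero {N : ℕ} (s : Fin N → Bool) : psum s 0 = 0 := by
  simp [psum]

lemma W_zero (N : ℕ) : W 0 N = 0 := by
  unfold W
  rw [Finset.card_eq_zero]
  apply Finset.eq_empty_iff_forall_notMem.mpr
  intro s hs
  simp only [Finset.mem_filter] at hs
  have := hs.2 0 (Finset.mem_range.mpr (by omega))
  rw [psum_zero] at this
  simp at this

lemma W_base (a : ℕ) : W (a + 1) 0 = 1 := by
  unfold W
  apply Finset.card_eq_one.mpr
  refine ⟨fun _ => true, ?_⟩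
  apply Finset.eq_singleton_iff_unique_mem.mpr
  constructor
  · simp only [Finset.mem_filter]
    refine ⟨Finset.mem_univ _, ?_⟩
    intro k hk
    obtain rfl : k = 0 := by simpa using hk
    rw [psum_zero]
    push_cast
    omega
  · intro t _
    exact funext fun i => i.elim0

lemma psum_cons {N : ℕ} (c : Bool) (t : Fin N → Bool) (k : ℕ) :
    psum (Fin.cons c t) (k + 1) = stepVal c + psum t k := by
  unfold psum
  rw [Finset.sum_range_succ']
  rw [add_comm]
  congr 1
  · simp [Fin.cons]

lemma psum_eq_cons {N : ℕ} (s : Fin (N + 1) → Bool) (k : ℕ) :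
    psum s (k + 1) = stepVal (s 0) + psum (Fin.tail s) k := by
  conv_lhs => rw [← Fin.cons_self_tail s]
  rw [psum_cons]

lemma W_rec (a N : ℕ) : W (a + 1) (N + 1) = W a N + W (a + 2) N := by
  classical
  unfold W
  have split := Finset.card_filter_add_card_filter_not
    (s := (Finset.univ : Finset (Fin (N+1) → Bool)).filter
      (fun s => ∀ k ∈ Finset.range (N + 1 + 1), psum s k < ((a + 1 : ℕ) : ℤ)))
    (p := fun s => s 0 = true)
  rw [Finset.filter_filter, Finset.filter_filter] at split
  rw [← split]
  clear split
  congr 1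
  · -- first step up
    apply Finset.card_nbij' (fun s => Fin.tail s) (fun t => Fin.cons true t)
    · intro s hs
      simp only [Finset.mem_coe, Finset.mem_filter, Finset.mem_range] at hs ⊢
      obtain ⟨-, hP, h0⟩ := hs
      refine ⟨Finset.mem_univ _, ?_⟩
      intro k hk
      have h2 := hP (k + 1) (by omega)
      rw [psum_eq_cons, h0] at h2
      simp only [stepVal, if_true] at h2
      push_cast at h2 ⊢
      omega
    · intro t ht
      simp only [Finset.mem_coe, Finset.mem_filter, Finset.mem_range] at ht ⊢
      refine ⟨Finset.mem_univ _, ?_, Fin.cons_zero _ _⟩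
      intro k hk
      cases k with
      | zero => rw [psum_zero]; push_cast; omega
      | succ k =>
        rw [psum_cons]
        have h2 := ht.2 k (by omega)
        simp only [stepVal, if_true]
        push_cast at h2 ⊢
        omega
    · intro s hs
      simp only [Finset.mem_coe, Finset.mem_filter] at hs
      rw [← hs.2.2]
      exact Fin.cons_self_tail s
    · intro t _
      exact Fin.tail_cons _ _
  · -- first step down
    apply Finset.card_nbij' (fun s => Fin.tail s) (fun t => Fin.cons false t)
    · intro s hs
      simp only [Finset.mem_coe, Finset.mem_filter, Finset.mem_range, Bool.not_eq_true] at hs ⊢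
      obtain ⟨-, hP, h0⟩ := hs
      refine ⟨Finset.mem_univ _, ?_⟩
      intro k hk
      have h2 := hP (k + 1) (by omega)
      rw [psum_eq_cons, h0] at h2
      simp only [stepVal, Bool.false_eq_true, if_false] at h2
      push_cast at h2 ⊢
      omega
    · intro t ht
      simp only [Finset.mem_coe, Finset.mem_filter, Finset.mem_range, Bool.not_eq_true] at ht ⊢
      refine ⟨Finset.mem_univ _, ?_, Fin.cons_zero _ _⟩
      intro k hk
      cases k with
      | zero => rw [psum_zero]; push_cast; omega
      | succ k =>
        rw [psum_cons]
        have h2 := ht.2 k (by omega)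
        simp only [stepVal, Bool.false_eq_true, if_false]
        push_cast at h2 ⊢
        omega
    · intro s hs
      simp only [Finset.mem_coe, Finset.mem_filter, Bool.not_eq_true] at hs
      rw [← hs.2.2]
      exact Fin.cons_self_tail s
    · intro t _
      exact Fin.tail_cons _ _



/-- Binomial coefficient extended to integer lower index. -/
def bb (N : ℕ) (j : ℤ) : ℤ := if 0 ≤ j then (N.choose j.toNat : ℤ) else 0

lemma bb_neg (N : ℕ) {j : ℤ} (h : j < 0) : bb N j = 0 := by
  simp [bb, not_le.mpr h]

lemma bb_nat (N k : ℕ) : bb N (k : ℤ) = (N.choose k : ℤ) := by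
  simp [bb]

lemma bb_pascal (N : ℕ) (j : ℤ) : bb (N + 1) j = bb N j + bb N (j - 1) := by
  rcases lt_trichotomy j 0 with h | h | h
  · rw [bb_neg _ h, bb_neg _ h, bb_neg _ (by omega)]; ring
  · subst h
    simp [bb]
  · obtain ⟨k, rfl⟩ : ∃ k : ℕ, j = (k : ℤ) + 1 := by
      refine ⟨(j - 1).toNat, by omega⟩
    rw [show ((k : ℤ) + 1) - 1 = (k : ℤ) by ring,
        show ((k : ℤ) + 1) = ((k + 1 : ℕ) : ℤ) by push_cast; ring,
        bb_nat, bb_nat, bb_nat]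
    rw [Nat.choose_succ_succ']
    push_cast
    ring

/-- Closed form for the survival count. -/
def F (a N : ℕ) : ℤ :=
  ∑ k ∈ Finset.range ((N + a + 1) / 2), (bb N (k : ℤ) - bb N ((k : ℤ) - (a : ℤ)))

lemma F_zero (N : ℕ) : F 0 N = 0 := by
  simp [F]

lemma F_base (a : ℕ) : F (a + 1) 0 = 1 := by
  unfold F
  rw [Finset.sum_congr rfl (g := fun k => if k = 0 then (1:ℤ) else 0) ?_]
  · rw [Finset.sum_ite_eq' _ 0 (fun _ => (1:ℤ))]
    simp only [Finset.mem_range]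
    rw [if_pos (by omega)]
  · intro k hk
    simp only [Finset.mem_range] at hk
    have h1 : ((k : ℤ) - ((a + 1 : ℕ) : ℤ)) < 0 := by push_cast; omega
    rw [bb_neg _ h1, bb_nat]
    rcases Nat.eq_zero_or_pos k with rfl | hk0
    · simp
    · rw [Nat.choose_eq_zero_of_lt hk0]
      simp [hk0.ne']

lemma F_rec (a N : ℕ) : F (a + 1) (N + 1) = F a N + F (a + 2) N := by
  have hm1 : (N + 1 + (a + 1) + 1) / 2 = (N + a + 1) / 2 + 1 := by omega
  have hm2 : (N + (a + 2) + 1) / 2 = (N + a + 1) / 2 + 1 := by omega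
  unfold F
  rw [hm1, hm2]
  set m := (N + a + 1) / 2 with hm
  rw [Finset.sum_range_succ' (fun k => bb (N+1) (k : ℤ) - bb (N+1) ((k : ℤ) - ((a+1 : ℕ) : ℤ))) m,
      Finset.sum_range_succ' (fun k => bb N (k : ℤ) - bb N ((k : ℤ) - ((a+2 : ℕ) : ℤ))) m]
  have h0 : bb (N+1) (((0:ℕ) : ℤ)) - bb (N+1) (((0:ℕ) : ℤ) - ((a+1 : ℕ) : ℤ)) = 1 := by
    have hlt : (((0:ℕ) : ℤ) - ((a+1 : ℕ) : ℤ)) < 0 := by push_cast; omega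
    rw [bb_neg _ hlt, bb_nat]
    simp
  have h0' : bb N (((0:ℕ) : ℤ)) - bb N (((0:ℕ) : ℤ) - ((a+2 : ℕ) : ℤ)) = 1 := by
    have hlt : (((0:ℕ) : ℤ) - ((a+2 : ℕ) : ℤ)) < 0 := by push_cast; omega
    rw [bb_neg _ hlt, bb_nat]
    simp
  rw [h0, h0']
  have key : ∀ k ∈ Finset.range m,
      bb (N+1) ((k+1 : ℕ) : ℤ) - bb (N+1) (((k+1 : ℕ) : ℤ) - ((a+1 : ℕ) : ℤ))
      = (bb N ((k : ℕ) : ℤ) - bb N (((k : ℕ) : ℤ) - ((a : ℕ) : ℤ)))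
        + (bb N ((k+1 : ℕ) : ℤ) - bb N (((k+1 : ℕ) : ℤ) - ((a+2 : ℕ) : ℤ))) := by
    intro k _
    have p1 : bb (N+1) ((k+1 : ℕ) : ℤ) = bb N ((k+1 : ℕ) : ℤ) + bb N ((k : ℕ) : ℤ) := by
      rw [bb_pascal]
      congr 2
      push_cast; ring
    have p2 : bb (N+1) (((k+1 : ℕ) : ℤ) - ((a+1 : ℕ) : ℤ))
        = bb N (((k : ℕ) : ℤ) - ((a : ℕ) : ℤ)) + bb N (((k+1 : ℕ) : ℤ) - ((a+2 : ℕ) : ℤ)) := by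
      rw [bb_pascal]
      congr 2
      · push_cast; ring
      · push_cast; ring
    rw [p1, p2]
    ring
  rw [Finset.sum_congr rfl key, Finset.sum_add_distrib]
  ring

lemma F_one (N : ℕ) : F 1 N = (N.choose (N / 2) : ℤ) := by
  unfold F
  have h : ∀ k : ℕ, bb N (k : ℤ) - bb N ((k : ℤ) - (1 : ℕ))
      = (fun j : ℕ => bb N ((j : ℤ) - 1)) (k + 1) - (fun j : ℕ => bb N ((j : ℤ) - 1)) k := by
    intro k
    simp only []
    congr 2 <;> push_cast <;> ring
  calc ∑ k ∈ Finset.range ((N + 1 + 1) / 2), (bb N (k : ℤ) - bb N ((k : ℤ) - ((1:ℕ) : ℤ)))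
      = ∑ k ∈ Finset.range ((N + 1 + 1) / 2),
          ((fun j : ℕ => bb N ((j : ℤ) - 1)) (k + 1) - (fun j : ℕ => bb N ((j : ℤ) - 1)) k) :=
        Finset.sum_congr rfl (fun k _ => h k)
    _ = bb N ((((N + 1 + 1) / 2 : ℕ) : ℤ) - 1) - bb N (((0:ℕ) : ℤ) - 1) := by
        rw [Finset.sum_range_sub (fun j : ℕ => bb N ((j : ℤ) - 1))]
    _ = (N.choose (N / 2) : ℤ) := by
        have h1 : (((N + 1 + 1) / 2 : ℕ) : ℤ) - 1 = ((N / 2 : ℕ) : ℤ) := by push_cast; omega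
        have h2 : (((0:ℕ) : ℤ) - 1) < 0 := by norm_num
        rw [h1, bb_neg _ h2, bb_nat]
        ring


lemma W_eq_F : ∀ (N a : ℕ), (W a N : ℤ) = F a N := by
  intro N
  induction N with
  | zero =>
    intro a
    cases a with
    | zero => rw [W_zero, F_zero]; simp
    | succ a => rw [W_base, F_base]; simp
  | succ N ih =>
    intro a
    cases a with
    | zero => rw [W_zero, F_zero]; simp
    | succ a =>
      rw [W_rec, F_rec]
      push_cast
      rw [ih a, ih (a + 2)]

theorem survival_count_ballot_sum (N : ℕ) (hN : 1 ≤ N) :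
    (W 1 N : ℚ)
      = ∑ k ∈ Finset.Icc ((N + 1) / 2) N,
          (N.choose k : ℚ) * (2 * (k : ℚ) - (N : ℚ) + 1) / ((k : ℚ) + 1) := by
  set n := (N + 1) / 2 with hn_def
  have hn : n ≤ N := by omega
  have hterm : ∀ k ∈ Finset.Icc n N,
      (N.choose k : ℚ) * (2 * (k : ℚ) - (N : ℚ) + 1) / ((k : ℚ) + 1)
      = (N.choose k : ℚ) - (N.choose (k + 1) : ℚ) := by
    intro k hk
    simp only [Finset.mem_Icc] at hk
    have hchoose : (N.choose (k + 1) : ℚ) * ((k : ℚ) + 1)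
        = (N.choose k : ℚ) * ((N : ℚ) - (k : ℚ)) := by
      calc (N.choose (k + 1) : ℚ) * ((k : ℚ) + 1)
          = ((N.choose (k + 1) * (k + 1) : ℕ) : ℚ) := by push_cast; ring
        _ = ((N.choose k * (N - k) : ℕ) : ℚ) := by rw [Nat.choose_succ_right_eq]
        _ = (N.choose k : ℚ) * ((N : ℚ) - (k : ℚ)) := by push_cast [hk.2]; ring
    have hk1 : ((k : ℚ) + 1) ≠ 0 := by positivity
    field_simp
    linear_combination hchoose
  rw [Finset.sum_congr rfl hterm]
  rw [← Finset.Ico_add_one_right_eq_Icc, Finset.sum_Ico_eq_sum_range]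
  have hstep : ∀ i ∈ Finset.range (N + 1 - n),
      ((N.choose (n + i) : ℚ) - (N.choose (n + i + 1) : ℚ))
      = (fun j => (N.choose (n + j) : ℚ)) i - (fun j => (N.choose (n + j) : ℚ)) (i + 1) := by
    intro i _
    simp only [Nat.add_assoc]
  rw [Finset.sum_congr rfl hstep]
  rw [Finset.sum_range_sub' (fun j => (N.choose (n + j) : ℚ))]
  have h1 : n + (N + 1 - n) = N + 1 := by omega
  rw [h1]
  have h2 : N.choose (N + 1) = 0 := Nat.choose_eq_zero_of_lt (by omega)
  rw [h2]
  have h3 : (W 1 N : ℤ) = (N.choose (N / 2) : ℤ) := by rw [W_eq_F N 1, F_one]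
  have h4 : N.choose (N / 2) = N.choose n := by
    have := Nat.choose_symm hn
    have hd : N - n = N / 2 := by omega
    rw [hd] at this
    exact this
  have h5 : (W 1 N : ℚ) = (N.choose n : ℚ) := by
    have h6 : (W 1 N : ℤ) = (N.choose n : ℤ) := by rw [h3]; exact_mod_cast h4
    exact_mod_cast h6
  rw [h5]
  simp
end

section
/- For every natural number N ≥ 1, with n = ⌈N/2⌉, the number W(1,N) of step sequences of length N whose partial sums satisfy S_k ≤ 0 for all 1 ≤ k ≤ N equals 2^{N−2n} · binom(2n, n). Equivalently, the survival probability of the walk after N steps is 2^{−2n}·binom(2n,n). (Eq. (11) of the paper.) -/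
open Finset
open Classical

noncomputable def D (N : ℕ) (e : ℤ) : ℕ :=
  ((Finset.univ : Finset (Fin N → Bool)).filter
    (fun s => (∀ k ∈ Finset.range (N + 1), psum s k ≤ 0) ∧ psum s N = e)).card

lemma psum_snoc_le {N : ℕ} (s : Fin N → Bool) (b : Bool) {k : ℕ} (hk : k ≤ N) :
    psum (Fin.snoc s b) k = psum s k := by
  unfold psum
  refine Finset.sum_congr rfl (fun j hj => ?_)
  have hjN : j < N := lt_of_lt_of_le (Finset.mem_range.mp hj) hk
  rw [dif_pos hjN, dif_pos (Nat.lt_succ_of_lt hjN)]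
  congr 1
  have : (⟨j, Nat.lt_succ_of_lt hjN⟩ : Fin (N+1)) = Fin.castSucc ⟨j, hjN⟩ := rfl
  rw [this, Fin.snoc_castSucc]

lemma psum_snoc_last {N : ℕ} (s : Fin N → Bool) (b : Bool) :
    psum (Fin.snoc s b) (N + 1) = psum s N + stepVal b := by
  have h1 : psum (Fin.snoc s b) (N + 1)
      = psum (Fin.snoc s b) N
        + (if h : N < N + 1 then stepVal ((Fin.snoc s b : Fin (N+1) → Bool) ⟨N, h⟩) else 0) := by
    unfold psum; rw [Finset.sum_range_succ]
  rw [h1, psum_snoc_le s b le_rfl, dif_pos (Nat.lt_succ_self N)]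
  congr 1
  have : (⟨N, Nat.lt_succ_self N⟩ : Fin (N+1)) = Fin.last N := rfl
  rw [this, Fin.snoc_last]

lemma D_succ {N : ℕ} {e : ℤ} (he : e ≤ 0) : D (N + 1) e = D N (e + 1) + D N (e - 1) := by
  unfold D
  have key : ∀ b : Bool,
      #(filter (fun s : Fin (N+1) → Bool => s (Fin.last N) = b)
        (filter (fun s => (∀ k ∈ range (N+1+1), psum s k ≤ 0) ∧ psum s (N+1) = e) univ))
      = #(filter (fun t : Fin N → Bool =>
          (∀ k ∈ range (N+1+1), psum (Fin.snoc t b : Fin (N+1) → Bool) k ≤ 0) ∧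
            psum (Fin.snoc t b : Fin (N+1) → Bool) (N+1) = e) univ) := by
    intro b
    apply Finset.card_nbij' (fun s => Fin.init s) (fun t => Fin.snoc t b)
    · intro s hs
      simp only [Finset.mem_coe, Finset.mem_filter, Finset.mem_univ, true_and] at hs ⊢
      obtain ⟨hP, hb⟩ := hs
      rw [← hb, Fin.snoc_init_self]
      exact hP
    · intro t ht
      simp only [Finset.mem_coe, Finset.mem_filter, Finset.mem_univ, true_and] at ht ⊢
      exact ⟨ht, Fin.snoc_last _ _⟩
    · intro s hs
      simp only [Finset.mem_coe, Finset.mem_filter] at hs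
      rw [← hs.2]; exact Fin.snoc_init_self s
    · intro t ht
      exact Fin.init_snoc _ _
  have negeq :
      filter (fun s : Fin (N+1) → Bool => ¬ s (Fin.last N) = false)
        (filter (fun s => (∀ k ∈ range (N+1+1), psum s k ≤ 0) ∧ psum s (N+1) = e) univ)
      = filter (fun s : Fin (N+1) → Bool => s (Fin.last N) = true)
        (filter (fun s => (∀ k ∈ range (N+1+1), psum s k ≤ 0) ∧ psum s (N+1) = e) univ) := by
    ext s; simp
  have split := Finset.card_filter_add_card_filter_not
    (s := filter (fun s : Fin (N+1) → Bool =>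
      (∀ k ∈ range (N+1+1), psum s k ≤ 0) ∧ psum s (N+1) = e) univ)
    (p := fun s => s (Fin.last N) = false)
  rw [← split, negeq, key false, key true]
  have ifff : ∀ t : Fin N → Bool,
      ((∀ k ∈ Finset.range (N+1+1), psum (Fin.snoc t false : Fin (N+1) → Bool) k ≤ 0) ∧
          psum (Fin.snoc t false : Fin (N+1) → Bool) (N+1) = e)
        ↔ ((∀ k ∈ Finset.range (N+1), psum t k ≤ 0) ∧ psum t N = e + 1) := by
    intro t
    constructor
    · rintro ⟨h1, h2⟩
      rw [psum_snoc_last] at h2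
      have hend : psum t N = e + 1 := by simp [stepVal] at h2; linarith
      refine ⟨fun k hk => ?_, hend⟩
      have hk' : k ≤ N := by simpa [Nat.lt_succ_iff] using Finset.mem_range.mp hk
      have h3 := h1 k (Finset.mem_range.mpr (Nat.lt_succ_of_lt (Nat.lt_succ_of_le hk')))
      rwa [psum_snoc_le t false hk'] at h3
    · rintro ⟨h1, h2⟩
      have hlast : psum (Fin.snoc t false : Fin (N+1) → Bool) (N + 1) = e := by
        rw [psum_snoc_last, h2]; simp [stepVal]
      refine ⟨fun k hk => ?_, hlast⟩
      have hk' : k ≤ N + 1 := by simpa [Nat.lt_succ_iff] using Finset.mem_range.mp hk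
      rcases Nat.lt_or_ge k (N + 1) with h | h
      · rw [psum_snoc_le t false (Nat.lt_succ_iff.mp h)]
        exact h1 k (Finset.mem_range.mpr h)
      · have hkk : k = N + 1 := le_antisymm hk' h
        rw [hkk, hlast]; exact he
  have ifft : ∀ t : Fin N → Bool,
      ((∀ k ∈ Finset.range (N+1+1), psum (Fin.snoc t true : Fin (N+1) → Bool) k ≤ 0) ∧
          psum (Fin.snoc t true : Fin (N+1) → Bool) (N+1) = e)
        ↔ ((∀ k ∈ Finset.range (N+1), psum t k ≤ 0) ∧ psum t N = e - 1) := by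
    intro t
    constructor
    · rintro ⟨h1, h2⟩
      rw [psum_snoc_last] at h2
      have hend : psum t N = e - 1 := by simp [stepVal] at h2; linarith
      refine ⟨fun k hk => ?_, hend⟩
      have hk' : k ≤ N := by simpa [Nat.lt_succ_iff] using Finset.mem_range.mp hk
      have h3 := h1 k (Finset.mem_range.mpr (Nat.lt_succ_of_lt (Nat.lt_succ_of_le hk')))
      rwa [psum_snoc_le t true hk'] at h3
    · rintro ⟨h1, h2⟩
      have hlast : psum (Fin.snoc t true : Fin (N+1) → Bool) (N + 1) = e := by
        rw [psum_snoc_last, h2]; simp [stepVal]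
      refine ⟨fun k hk => ?_, hlast⟩
      have hk' : k ≤ N + 1 := by simpa [Nat.lt_succ_iff] using Finset.mem_range.mp hk
      rcases Nat.lt_or_ge k (N + 1) with h | h
      · rw [psum_snoc_le t true (Nat.lt_succ_iff.mp h)]
        exact h1 k (Finset.mem_range.mpr h)
      · have hkk : k = N + 1 := le_antisymm hk' h
        rw [hkk, hlast]; exact he
  congr 1
  · refine congrArg Finset.card ?_
    ext t
    simp only [Finset.mem_filter, Finset.mem_univ, true_and]
    exact ifff t
  · refine congrArg Finset.card ?_
    ext t
    simp only [Finset.mem_filter, Finset.mem_univ, true_and]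
    exact ifft t

lemma psum_ge {N : ℕ} (s : Fin N → Bool) (k : ℕ) : -(k : ℤ) ≤ psum s k := by
  unfold psum
  calc -(k:ℤ) = ∑ _j ∈ Finset.range k, (-1 : ℤ) := by simp
  _ ≤ _ := by
      refine Finset.sum_le_sum (fun j hj => ?_)
      by_cases h : j < N
      · rw [dif_pos h]; unfold stepVal; split <;> omega
      · rw [dif_neg h]; omega

lemma D_pos {N : ℕ} {e : ℤ} (he : 0 < e) : D N e = 0 := by
  by_contra h
  have hpos := Finset.card_pos.mp (Nat.pos_of_ne_zero (by unfold D at h; exact h))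
  obtain ⟨s, hs⟩ := hpos
  simp only [Finset.mem_filter] at hs
  obtain ⟨-, h1, h2⟩ := hs
  have := h1 N (Finset.mem_range.mpr (Nat.lt_succ_self N))
  omega

lemma D_low {N : ℕ} {e : ℤ} (he : e < -(N:ℤ)) : D N e = 0 := by
  by_contra h
  have hpos := Finset.card_pos.mp (Nat.pos_of_ne_zero (by unfold D at h; exact h))
  obtain ⟨s, hs⟩ := hpos
  simp only [Finset.mem_filter] at hs
  obtain ⟨-, h1, h2⟩ := hs
  have := psum_ge s N
  omega

lemma D_zero_zero : D 0 0 = 1 := by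
  unfold D
  simp [psum]

def g : ℕ → ℕ → ℤ
  | _, 0 => 1
  | N, (u+1) => (N.choose (u+1) : ℤ) - N.choose u

lemma D_closed : ∀ N u : ℕ, 2 * u ≤ N + 1 → (D N (2 * (u:ℤ) - N) : ℤ) = g N u := by
  intro N
  induction N with
  | zero =>
    intro u hu
    have hu0 : u = 0 := by omega
    subst hu0
    simpa [g] using congrArg (Nat.cast : ℕ → ℤ) D_zero_zero
  | succ N ih =>
    intro u hu
    match u with
    | 0 =>
      have he : (2 * ((0:ℕ):ℤ) - (N+1:ℕ)) = -((N:ℤ)+1) := by push_cast; ring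
      rw [he]
      have hrec := D_succ (N := N) (e := -((N:ℤ)+1)) (by omega)
      have h1 : -((N:ℤ)+1) + 1 = 2 * ((0:ℕ):ℤ) - N := by push_cast; ring
      have h2 : D N (-((N:ℤ)+1) - 1) = 0 := D_low (by omega)
      rw [hrec, h1, h2, Nat.add_zero]
      have := ih 0 (by omega)
      rw [this]
      rfl
    | v+1 =>
      rcases Nat.lt_or_ge (2*(v+1)) (N+2) with hlt | hge
      · -- 2(v+1) ≤ N+1, interior case
        have hle : 2*(v+1) ≤ N+1 := by omega
        have heneg : 2 * ((v+1:ℕ):ℤ) - ((N+1:ℕ):ℤ) ≤ 0 := by push_cast; omega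
        have hrec := D_succ (N := N) (e := 2 * ((v+1:ℕ):ℤ) - ((N+1:ℕ):ℤ)) heneg
        have e1 : 2 * ((v+1:ℕ):ℤ) - ((N+1:ℕ):ℤ) + 1 = 2 * ((v+1:ℕ):ℤ) - N := by push_cast; ring
        have e2 : 2 * ((v+1:ℕ):ℤ) - ((N+1:ℕ):ℤ) - 1 = 2 * ((v:ℕ):ℤ) - N := by push_cast; ring
        rw [hrec]
        push_cast
        rw [show 2 * ((v:ℤ) + 1) - ((N:ℤ) + 1) + 1 = 2 * ((v+1:ℕ):ℤ) - N from by push_cast; ring,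
          show 2 * ((v:ℤ) + 1) - ((N:ℤ) + 1) - 1 = 2 * ((v:ℕ):ℤ) - N from by push_cast; ring,
          ih (v+1) (by omega), ih v (by omega)]
        match v with
        | 0 =>
          simp [g, Nat.choose_one_right, Nat.choose_zero_right]
        | w+1 =>
          simp only [g]
          rw [Nat.choose_succ_succ N (w+1), Nat.choose_succ_succ N w]
          push_cast
          ring
      · -- boundary: N = 2v, e = 1
        have hN : N = 2*v := by omega
        have he1 : 2 * ((v+1:ℕ):ℤ) - ((N+1:ℕ):ℤ) = 1 := by subst hN; push_cast; ring
        rw [he1]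
        rw [D_pos (by omega)]
        subst hN
        show (0:ℤ) = g (2*v+1) (v+1)
        have hsymm : (2*v+1).choose (v+1) = (2*v+1).choose v := by
          have h := Nat.choose_symm (n := 2*v+1) (k := v+1) (by omega)
          rw [show 2*v+1 - (v+1) = v from by omega] at h
          exact h.symm
        simp [g, hsymm]

lemma psum_endpoint {N : ℕ} (s : Fin N → Bool) :
    ∃ u : ℕ, u ≤ N ∧ psum s N = 2 * (u:ℤ) - N := by
  suffices h : ∀ k, k ≤ N → ∃ u : ℕ, u ≤ k ∧ psum s k = 2 * (u:ℤ) - k from h N le_rfl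
  intro k
  induction k with
  | zero => intro _; exact ⟨0, le_rfl, by simp [psum]⟩
  | succ k ihk =>
    intro hk
    obtain ⟨u, hu, he⟩ := ihk (by omega)
    have hkN : k < N := by omega
    have hstep : psum s (k+1) = psum s k + stepVal (s ⟨k, hkN⟩) := by
      unfold psum; rw [Finset.sum_range_succ, dif_pos hkN]
    cases hb : s ⟨k, hkN⟩
    · refine ⟨u, by omega, ?_⟩
      rw [hstep, hb, he]
      unfold stepVal
      push_cast
      norm_num
      ring
    · refine ⟨u+1, by omega, ?_⟩
      rw [hstep, hb, he]
      unfold stepVal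
      push_cast
      norm_num
      ring

open Classical in
lemma W_eq_sum (N : ℕ) : W 1 N = ∑ u ∈ Finset.range (N+1), D N (2 * (u:ℤ) - N) := by
  unfold W
  have H : ∀ s ∈ (Finset.univ : Finset (Fin N → Bool)).filter
      (fun s => ∀ k ∈ Finset.range (N + 1), psum s k < ((1:ℕ) : ℤ)),
      (fun s => psum s N) s ∈ (Finset.range (N+1)).image (fun u : ℕ => 2 * (u:ℤ) - N) := by
    intro s _
    obtain ⟨u, hu, he⟩ := psum_endpoint s
    exact Finset.mem_image.mpr ⟨u, Finset.mem_range.mpr (by omega), he.symm⟩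
  rw [Finset.card_eq_sum_card_fiberwise H, Finset.sum_image
    (by intro a _ b _ hab; have hab' : 2 * (a:ℤ) - N = 2 * (b:ℤ) - N := hab; omega)]
  refine Finset.sum_congr rfl (fun u _ => ?_)
  unfold D
  refine congrArg Finset.card ?_
  rw [Finset.filter_filter]
  ext s
  simp only [Finset.mem_filter, Finset.mem_univ, true_and]
  constructor
  · rintro ⟨h1, h2⟩
    refine ⟨fun k hk => ?_, h2⟩
    have := h1 k hk
    omega
  · rintro ⟨h1, h2⟩
    refine ⟨fun k hk => ?_, h2⟩
    have := h1 k hk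
    omega

lemma g_sum (N M : ℕ) : ∑ u ∈ Finset.range (M+1), g N u = (N.choose M : ℤ) := by
  induction M with
  | zero => simp [g]
  | succ M ihM =>
    rw [Finset.sum_range_succ, ihM]
    show (N.choose M : ℤ) + g N (M+1) = _
    simp [g]

lemma W_count (N : ℕ) : (W 1 N : ℤ) = (N.choose (N/2) : ℤ) := by
  rw [W_eq_sum]
  have htrunc : ∑ u ∈ Finset.range (N+1), D N (2 * (u:ℤ) - N)
      = ∑ u ∈ Finset.range (N/2+1), D N (2 * (u:ℤ) - N) := by
    refine (Finset.sum_subset (Finset.range_subset_range.mpr (by omega)) ?_).symm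
    intro u hu hnu
    have h1 : N/2 + 1 ≤ u := by
      by_contra hc
      exact hnu (Finset.mem_range.mpr (by omega))
    exact D_pos (by omega)
  rw [htrunc]
  push_cast
  rw [Finset.sum_congr rfl (fun u hu => D_closed N u
    (by have := Finset.mem_range.mp hu; omega))]
  exact g_sum N (N/2)

/- Eq. (11) of the paper: for `N ≥ 1` and `n = ⌈N/2⌉`, the number `W(1,N)` of step
sequences of length `N` with `S_k ≤ 0` for all `1 ≤ k ≤ N` equals
`2^{N−2n}·binom(2n,n)`; equivalently, the survival probability after `N` steps is
`2^{−2n}·binom(2n,n)`. -/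
theorem survival_count_central_binomial (N : ℕ) (hN : 1 ≤ N) :
    (W 1 N : ℚ)
      = (2 : ℚ) ^ ((N : ℤ) - 2 * (((N + 1) / 2 : ℕ) : ℤ))
          * (((2 * ((N + 1) / 2)).choose ((N + 1) / 2) : ℕ) : ℚ) := by
  have hw : (W 1 N : ℚ) = (N.choose (N/2) : ℚ) := by
    exact_mod_cast congrArg (fun z : ℤ => (z : ℚ)) (W_count N)
  rw [hw]
  rcases Nat.even_or_odd N with ⟨m, hm⟩ | ⟨m, hm⟩
  · -- N = m + m
    subst hm
    have h1 : (m + m + 1) / 2 = m := by omega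
    have h2 : (m + m) / 2 = m := by omega
    rw [h1, h2]
    have h3 : ((m + m : ℕ) : ℤ) - 2 * (m : ℤ) = 0 := by push_cast; ring
    rw [h3, zpow_zero, one_mul]
    norm_cast
    rw [show 2 * m = m + m from by ring]
  · -- N = 2m + 1
    subst hm
    have h1 : (2 * m + 1 + 1) / 2 = m + 1 := by omega
    have h2 : (2 * m + 1) / 2 = m := by omega
    rw [h1, h2]
    have h3 : ((2 * m + 1 : ℕ) : ℤ) - 2 * ((m + 1 : ℕ) : ℤ) = -1 := by push_cast; ring
    rw [h3]
    have hsymm : (2*m+1).choose (m+1) = (2*m+1).choose m := by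
      have h := Nat.choose_symm (n := 2*m+1) (k := m+1) (by omega)
      rw [show 2*m+1 - (m+1) = m from by omega] at h
      exact h.symm
    have hnat : (2 * (m+1)).choose (m+1) = 2 * (2*m+1).choose m := by
      rw [show 2 * (m+1) = (2*m+1) + 1 from by ring, Nat.choose_succ_succ (2*m+1) m, hsymm]
      ring
    rw [hnat]
    push_cast
    rw [zpow_neg, zpow_one]
    ring
end

section
/- For every natural number N ≥ 0, W(3, N) + W(1, N) = W(1, N+2); equivalently P_3[M>N] = 4·P_1[M>N+2] − P_1[M>N]. (Eq. (64) in the proof of Theorem 1.) -/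
namespace SurvivalAux

/-- Drop the first two steps. -/
def tl {N : ℕ} (t : Fin (N + 2) → Bool) : Fin N → Bool :=
  fun j => t ⟨(j : ℕ) + 2, by omega⟩

/-- Prepend two steps. -/
def ext {N : ℕ} (b0 b1 : Bool) (s : Fin N → Bool) : Fin (N + 2) → Bool :=
  fun i => if h : 2 ≤ (i : ℕ) then s ⟨(i : ℕ) - 2, by have := i.isLt; omega⟩
    else if (i : ℕ) = 0 then b0 else b1

lemma psum_zero {N : ℕ} (s : Fin N → Bool) : psum s 0 = 0 := by simp [psum]

lemma psum_succ {N : ℕ} (s : Fin N → Bool) (k : ℕ) :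
    psum s (k + 1) = psum s k + (if h : k < N then stepVal (s ⟨k, h⟩) else 0) :=
  Finset.sum_range_succ _ _

lemma psum_tail {N : ℕ} (t : Fin (N + 2) → Bool) (k : ℕ) :
    psum t (k + 2) = stepVal (t 0) + stepVal (t 1) + psum (tl t) k := by
  induction k with
  | zero =>
      have h0 : (0 : ℕ) < N + 2 := by omega
      have h1 : (1 : ℕ) < N + 2 := by omega
      rw [psum_succ, psum_succ, psum_zero, dif_pos h0, dif_pos h1, psum_zero]
      have e0 : (⟨0, h0⟩ : Fin (N + 2)) = 0 := by ext; simp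
      have e1 : (⟨1, h1⟩ : Fin (N + 2)) = 1 := by ext; simp
      rw [e0, e1]; ring
  | succ k ih =>
      rw [show k + 1 + 2 = (k + 2) + 1 from rfl, psum_succ, ih, psum_succ]
      by_cases h : k < N
      · rw [dif_pos h, dif_pos (by omega : k + 2 < N + 2)]
        have : t ⟨k + 2, by omega⟩ = tl t ⟨k, h⟩ := rfl
        rw [this]; ring
      · rw [dif_neg h, dif_neg (by omega : ¬ k + 2 < N + 2)]; ring

lemma tl_ext {N : ℕ} (b0 b1 : Bool) (s : Fin N → Bool) : tl (ext b0 b1 s) = s := by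
  funext j
  simp only [tl, ext]
  rw [dif_pos (by omega)]
  exact congrArg s (Fin.ext (by simp))

lemma ext_zero {N : ℕ} (b0 b1 : Bool) (s : Fin N → Bool) : ext b0 b1 s 0 = b0 := by
  simp [ext]

lemma ext_one {N : ℕ} (b0 b1 : Bool) (s : Fin N → Bool) : ext b0 b1 s 1 = b1 := by
  simp [ext]

lemma ext_tl {N : ℕ} (t : Fin (N + 2) → Bool) : ext (t 0) (t 1) (tl t) = t := by
  funext i
  simp only [ext, tl]
  split_ifs with h h0
  · congr 1; ext; simp; omega
  · congr 1; ext; simp [h0]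
  · have h1 : (i : ℕ) = 1 := by omega
    congr 1; ext; simp [h1]

/-- The survival condition for a walk of length `N+2` at distance 1, split. -/
lemma mem_iff {N : ℕ} (t : Fin (N + 2) → Bool) :
    (∀ k ∈ Finset.range (N + 3), psum t k < 1) ↔
      t 0 = false ∧
        (∀ k ∈ Finset.range (N + 1), psum (tl t) k < (if t 1 then 1 else 3)) := by
  constructor
  · intro h
    have h1 : psum t 1 < 1 := h 1 (by simp)
    rw [psum_succ, psum_zero, dif_pos (by omega : (0:ℕ) < N + 2)] at h1
    have e0 : (⟨0, by omega⟩ : Fin (N + 2)) = 0 := by ext; simp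
    rw [e0] at h1
    have ht0 : t 0 = false := by
      cases hb : t 0
      · rfl
      · rw [hb] at h1; simp [stepVal] at h1
    refine ⟨ht0, fun k hk => ?_⟩
    have hk2 : psum t (k + 2) < 1 := h (k + 2) (by simp at hk ⊢; omega)
    rw [psum_tail, ht0] at hk2
    cases hb : t 1 <;> rw [hb] at hk2 <;> simp [stepVal] at hk2 ⊢ <;> omega
  · rintro ⟨ht0, h⟩ k hk
    match k with
    | 0 => rw [psum_zero]; norm_num
    | 1 =>
        rw [psum_succ, psum_zero, dif_pos (by omega : (0:ℕ) < N + 2)]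
        have e0 : (⟨0, by omega⟩ : Fin (N + 2)) = 0 := by ext; simp
        rw [e0, ht0]; simp [stepVal]
    | (k + 2) =>
        have hk' : k ∈ Finset.range (N + 1) := by simp at hk ⊢; omega
        have := h k hk'
        rw [psum_tail, ht0]
        cases hb : t 1 <;> rw [hb] at this <;> simp [stepVal] at this ⊢ <;> omega

lemma count_part {N : ℕ} (b : Bool)
    [DecidablePred fun t : Fin (N + 2) → Bool =>
      (∀ k ∈ Finset.range (N + 3), psum t k < 1) ∧ t 1 = b] :
    (((Finset.univ : Finset (Fin (N + 2) → Bool)).filter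
        (fun t => (∀ k ∈ Finset.range (N + 3), psum t k < 1) ∧ t 1 = b)).card)
      = W (if b then 1 else 3) N := by
  classical
  rw [W]
  refine Finset.card_bij' (fun t _ => tl t) (fun s _ => ext false b s) ?_ ?_ ?_ ?_
  · intro t ht
    simp only [Finset.mem_filter, Finset.mem_univ, true_and] at ht ⊢
    obtain ⟨hcond, hb⟩ := ht
    rw [mem_iff] at hcond
    intro k hk
    have := hcond.2 k hk
    rw [hb] at this
    cases b <;> simpa using this
  · intro s hs
    simp only [Finset.mem_filter, Finset.mem_univ, true_and] at hs ⊢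
    constructor
    · rw [mem_iff]
      refine ⟨ext_zero _ _ _, fun k hk => ?_⟩
      rw [tl_ext, ext_one]
      have := hs k hk
      cases b <;> simpa using this
    · exact ext_one _ _ _
  · intro t ht
    simp only [Finset.mem_filter, Finset.mem_univ, true_and] at ht
    obtain ⟨hcond, hb⟩ := ht
    rw [mem_iff] at hcond
    have := ext_tl t
    rw [hcond.1, hb] at this
    exact this
  · intro s hs
    exact tl_ext _ _ _

end SurvivalAux

/- Eq. (64) in the proof of Theorem 1: for every `N ≥ 0`,
`W(3,N) + W(1,N) = W(1,N+2)`; equivalently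
`P_3[M>N] = 4·P_1[M>N+2] − P_1[M>N]`. -/
theorem survival_from_three (N : ℕ) :
    (W 3 N + W 1 N = W 1 (N + 2)) ∧
    ((W 3 N : ℚ) / 2 ^ N
      = 4 * ((W 1 (N + 2) : ℚ) / 2 ^ (N + 2)) - (W 1 N : ℚ) / 2 ^ N) := by
  classical
  have h1 : W 3 N + W 1 N = W 1 (N + 2) := by
    have hsplit := Finset.card_filter_add_card_filter_not
      (s := (Finset.univ : Finset (Fin (N + 2) → Bool)).filter
        (fun t => ∀ k ∈ Finset.range (N + 3), psum t k < 1))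
      (p := fun t => t 1 = true)
    rw [Finset.filter_filter, Finset.filter_filter] at hsplit
    have e1 : ((Finset.univ : Finset (Fin (N + 2) → Bool)).filter
        (fun t => (∀ k ∈ Finset.range (N + 3), psum t k < 1) ∧ t 1 = true)).card
        = W 1 N := by
      have h := SurvivalAux.count_part (N := N) true
      convert h using 2
      ext t
      simp [Finset.mem_filter]
      simp
    have e2 : ((Finset.univ : Finset (Fin (N + 2) → Bool)).filter
        (fun t => (∀ k ∈ Finset.range (N + 3), psum t k < 1) ∧ ¬ t 1 = true)).card
        = W 3 N := by
      have h := SurvivalAux.count_part (N := N) false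
      convert h using 2
      ext t
      simp [Finset.mem_filter]
      simp
    rw [e1, e2] at hsplit
    have hW : W 1 (N + 2) = ((Finset.univ : Finset (Fin (N + 2) → Bool)).filter
        (fun t => ∀ k ∈ Finset.range (N + 3), psum t k < 1)).card := by
      rw [W]; norm_num
      congr 1; ext x; simp only [Finset.mem_filter, Finset.mem_univ, true_and]
      exact ⟨fun h k hk => h k (by omega), fun h k hk => h k (by omega)⟩
    rw [hW, ← hsplit]
    ring
  refine ⟨h1, ?_⟩
  have h2 : (W 1 (N + 2) : ℚ) = W 3 N + W 1 N := by exact_mod_cast h1.symm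
  rw [h2]
  have h3 : (2 : ℚ) ^ (N + 2) = 4 * 2 ^ N := by ring
  rw [h3]
  have h4 : (2 : ℚ) ^ N ≠ 0 := by positivity
  field_simp
  ring
end

section
/- (Derivative of the two-boundary survival probability, eq. (45)-(47) of the paper in exact form) Let H > 0 be a real constant. For t > 0 define q(t) = exp(−2H²/t), ϑ(t) = 1 + 2·Σ_{i=1}^{∞} (−1)^i q(t)^{i²}, and P(t) = √(2/(πt))·ϑ(t). Then for every t > 0 the function P is differentiable at t with derivative P'(t) = (1/√(2πt³)) · ( −ϑ(t) + (8H²/t)·Σ_{i=1}^{∞} (−1)^i i² q(t)^{i²} ). -/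
open Real

theorem two_boundary_survival_deriv (H : ℝ) (hH : 0 < H) (t : ℝ) (ht : 0 < t) :
    HasDerivAt
      (fun u : ℝ =>
        Real.sqrt (2 / (Real.pi * u))
          * (1 + 2 * ∑' i : ℕ, (-1 : ℝ) ^ (i + 1) * Real.exp (-2 * H ^ 2 / u) ^ ((i + 1) ^ 2)))
      ((1 / Real.sqrt (2 * Real.pi * t ^ 3))
        * (-(1 + 2 * ∑' i : ℕ, (-1 : ℝ) ^ (i + 1) * Real.exp (-2 * H ^ 2 / t) ^ ((i + 1) ^ 2))
            + (8 * H ^ 2 / t)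
                * ∑' i : ℕ, (-1 : ℝ) ^ (i + 1) * ((i : ℝ) + 1) ^ 2
                    * Real.exp (-2 * H ^ 2 / t) ^ ((i + 1) ^ 2))) t := by
  set c : ℕ → ℝ := fun i => 2 * H ^ 2 * ((i:ℝ) + 1) ^ 2 with hc
  have hcpos : ∀ i, 0 < c i := by intro i; positivity
  have hterm : ∀ (i : ℕ) (u : ℝ),
      Real.exp (-2 * H ^ 2 / u) ^ ((i + 1) ^ 2) = Real.exp (-(c i) / u) := by
    intro i u
    rw [← Real.exp_nat_mul]
    congr 1
    push_cast [hc]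
    ring
  have hderiv : ∀ (i : ℕ), ∀ u ∈ Set.Ioi (0:ℝ),
      HasDerivAt (fun v => (-1:ℝ)^(i+1) * Real.exp (-(c i)/v))
        ((-1:ℝ)^(i+1) * (Real.exp (-(c i)/u) * (c i / u^2))) u := by
    intro i u hu
    have hu0 : u ≠ 0 := ne_of_gt hu
    have h1 : HasDerivAt (fun v : ℝ => -(c i) / v) (c i / u^2) u := by
      have h := (hasDerivAt_inv hu0).const_mul (-(c i))
      have e1 : -(c i) * -(u^2)⁻¹ = c i / u^2 := by field_simp
      have e2 : (fun v : ℝ => -(c i) * v⁻¹) = fun v : ℝ => -(c i)/v := by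
        funext v; rw [div_eq_mul_inv]
      rw [e1, e2] at h; exact h
    exact (h1.exp.const_mul _)
  have hbound : ∀ (i : ℕ), ∀ u ∈ Set.Ioi (0:ℝ),
      ‖(-1:ℝ)^(i+1) * (Real.exp (-(c i)/u) * (c i / u^2))‖ ≤ 4 / c i := by
    intro i u hu
    have hu0 : (0:ℝ) < u := hu
    set v := c i / u with hv
    have hvpos : 0 < v := div_pos (hcpos i) hu0
    have h1 : v^2/4 ≤ Real.exp v := by
      have h2 : v/2 + 1 ≤ Real.exp (v/2) := Real.add_one_le_exp _
      have h3 : (v/2)^2 ≤ (Real.exp (v/2))^2 := by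
        apply pow_le_pow_left₀ (by positivity)
        linarith
      calc v^2/4 = (v/2)^2 := by ring
        _ ≤ (Real.exp (v/2))^2 := h3
        _ = Real.exp v := by rw [sq, ← Real.exp_add]; ring_nf
    have hcu : c i / u^2 = v^2 / c i := by
      rw [hv]; field_simp
    have key : c i / u^2 ≤ 4 / c i * Real.exp v := by
      rw [hcu]
      have h4 : v^2 ≤ 4 * Real.exp v := by linarith
      rw [div_le_iff₀ (hcpos i)] at *
      calc v^2 ≤ 4 * Real.exp v := h4
        _ = 4 / c i * Real.exp v * c i := by field_simp [(hcpos i).ne']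
    have hnorm : ‖(-1:ℝ)^(i+1) * (Real.exp (-(c i)/u) * (c i / u^2))‖
        = Real.exp (-v) * (c i / u^2) := by
      rw [norm_mul, norm_pow, norm_neg, norm_one, one_pow, one_mul, Real.norm_eq_abs,
        abs_of_nonneg (by positivity), hv, neg_div]
    rw [hnorm]
    calc Real.exp (-v) * (c i / u^2) ≤ Real.exp (-v) * (4 / c i * Real.exp v) :=
          mul_le_mul_of_nonneg_left key (Real.exp_pos _).le
      _ = 4 / c i := by rw [Real.exp_neg]; field_simp
  have hsum : Summable (fun i : ℕ => 4 / c i) := by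
    have h0 : Summable (fun i : ℕ => (1:ℝ)/((i:ℝ)+1)^2) := by
      have h1 := Real.summable_one_div_nat_pow.mpr (by norm_num : 1 < 2)
      have h2 := (summable_nat_add_iff 1).mpr h1
      apply h2.congr
      intro n; push_cast; ring
    have h3 := h0.mul_left (2/H^2)
    apply h3.congr
    intro n
    rw [hc]
    field_simp
    ring
  -- summability at t
  have hq1 : Real.exp (-(2*H^2)/t) < 1 := by
    rw [neg_div, Real.exp_lt_one_iff, neg_lt_zero]
    positivity
  have hf0 : Summable (fun i : ℕ => (-1:ℝ)^(i+1) * Real.exp (-(c i)/t)) := by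
    apply Summable.of_norm_bounded
      (g := fun i : ℕ => Real.exp (-(2*H^2)/t) * Real.exp (-(2*H^2)/t) ^ i)
      ((summable_geometric_of_lt_one (Real.exp_pos _).le hq1).mul_left _)
    intro i
    rw [norm_mul, norm_pow, norm_neg, norm_one, one_pow, one_mul, Real.norm_eq_abs,
      abs_of_nonneg (Real.exp_pos _).le, ← pow_succ', ← Real.exp_nat_mul]
    apply Real.exp_le_exp.mpr
    have he : (↑(i+1):ℝ) * (-(2*H^2)/t) = (-(2*H^2*((i:ℝ)+1)))/t := by push_cast; ring
    show -(c i)/t ≤ _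
    simp only [hc]
    rw [he, div_le_div_iff₀ ht ht]
    have hi : (0:ℝ) ≤ (i:ℝ) := Nat.cast_nonneg i
    nlinarith [mul_nonneg (mul_nonneg (mul_nonneg (sq_nonneg H) hi) (by linarith : (0:ℝ) ≤ (i:ℝ)+1)) ht.le]
  have htmem : t ∈ Set.Ioi (0:ℝ) := ht
  have hS : HasDerivAt (fun z => ∑' i : ℕ, (-1:ℝ)^(i+1) * Real.exp (-(c i)/z))
      (∑' i : ℕ, (-1:ℝ)^(i+1) * (Real.exp (-(c i)/t) * (c i / t^2))) t :=
    hasDerivAt_tsum_of_isPreconnected hsum isOpen_Ioi isPreconnected_Ioi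
      hderiv hbound htmem hf0 htmem
  -- rewrite the sqrt prefactor
  have hA : ∀ u : ℝ, Real.sqrt (2 / (Real.pi * u)) = Real.sqrt (2/Real.pi) * (Real.sqrt u)⁻¹ := by
    intro u
    rw [show (2:ℝ)/(Real.pi*u) = (2/Real.pi)/u from (div_div 2 Real.pi u).symm,
      Real.sqrt_div (by positivity) u, div_eq_mul_inv]
  have hg : HasDerivAt (fun u : ℝ => (Real.sqrt u)⁻¹)
      (-(1/(2*Real.sqrt t)) / (Real.sqrt t)^2) t :=
    (Real.hasDerivAt_sqrt ht.ne').inv (Real.sqrt_ne_zero'.mpr ht)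
  have hP := (hg.const_mul (Real.sqrt (2/Real.pi))).mul ((hS.const_mul 2).const_add 1)
  have hfun : (fun u : ℝ => Real.sqrt (2/(Real.pi*u))
        * (1 + 2 * ∑' i : ℕ, (-1:ℝ)^(i+1) * Real.exp (-2*H^2/u)^((i+1)^2)))
      = fun u => Real.sqrt (2/Real.pi) * (Real.sqrt u)⁻¹
        * (1 + 2 * ∑' i : ℕ, (-1:ℝ)^(i+1) * Real.exp (-(c i)/u)) := by
    funext u
    simp only [hterm, hA]
  rw [hfun]
  refine HasDerivAt.congr_deriv hP ?_
  symm
  -- now an equality of real numbers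
  have hS' : (∑' i : ℕ, (-1:ℝ)^(i+1) * (Real.exp (-(c i)/t) * (c i / t^2)))
      = (2*H^2/t^2) * ∑' i : ℕ, (-1:ℝ)^(i+1) * ((i:ℝ)+1)^2 * Real.exp (-(c i)/t) := by
    rw [← tsum_mul_left]
    apply tsum_congr
    intro i
    simp only [hc]
    ring
  have h2 : Real.sqrt 2 ^ 2 = 2 := Real.sq_sqrt (by norm_num)
  have hπ2 : Real.sqrt Real.pi ^ 2 = Real.pi := Real.sq_sqrt Real.pi_pos.le
  have hst2 : Real.sqrt t ^ 2 = t := Real.sq_sqrt ht.le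
  have hsπ : Real.sqrt (2/Real.pi) = Real.sqrt 2 / Real.sqrt Real.pi :=
    Real.sqrt_div (by norm_num) Real.pi
  have h3 : Real.sqrt (2*Real.pi*t^3) = Real.sqrt 2 * Real.sqrt Real.pi * (t * Real.sqrt t) := by
    rw [show (2:ℝ)*Real.pi*t^3 = (Real.sqrt 2 * Real.sqrt Real.pi * (t*Real.sqrt t))^2 by
      rw [mul_pow, mul_pow, mul_pow, h2, hπ2, hst2]; ring]
    exact Real.sqrt_sq (by positivity)
  have hs0 : Real.sqrt t ≠ 0 := (Real.sqrt_pos.mpr ht).ne'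
  have h20 : Real.sqrt 2 ≠ 0 := by positivity
  have hπ0 : Real.sqrt Real.pi ≠ 0 := by
    simpa using (Real.sqrt_pos.mpr Real.pi_pos).ne'
  have hinv : 1 / Real.sqrt (2*Real.pi*t^3)
      = Real.sqrt (2/Real.pi) / (2*(t*Real.sqrt t)) := by
    rw [h3, hsπ]
    field_simp
    linear_combination (-1) * h2
  simp only [hterm]
  rw [hS', hinv]
  set A := ∑' i : ℕ, (-1:ℝ)^(i+1) * Real.exp (-(c i)/t) with hAdef
  set T := ∑' i : ℕ, (-1:ℝ)^(i+1) * ((i:ℝ)+1)^2 * Real.exp (-(c i)/t) with hTdef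
  set K := Real.sqrt (2/Real.pi) with hKdef
  set s := Real.sqrt t with hsdef
  rw [← hst2]
  field_simp
  ring
end
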